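/- arXiv:2311.03623 — 6 statements merged into one kernel-verified Lean document; each statement's English description precedes it below -/
import Mathlib

section
/- Let T > 0, let t satisfy 0 ≤ t ≤ T, let λ > 0 and μ ≥ 0 be real numbers. Then exp(-2*t*μ) / (exp(-2*T*μ) + λ)^2 ≤ λ^(t/T - 2), where the power on the right is the real power function. -/
open Real

/-! With `a = exp(-2Tμ)` and `θ = t/T ∈ [0, 1]` the left-hand side is `a^θ / (a + λ)^2`, and
`a^θ λ^(2-θ) ≤ (a + λ)^θ (a + λ)^(2-θ) = (a + λ)^2` by monotonicity of `x ↦ x^θ` and `x ↦ x^(2-θ)`. -/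

namespace Real

theorem rpow_mul_rpow_sub_le_add_rpow {a b θ s : ℝ} (ha : 0 ≤ a) (hb : 0 < b) (hθ : 0 ≤ θ)
    (hθs : θ ≤ s) : a ^ θ * b ^ (s - θ) ≤ (a + b) ^ s := by
  have hab : 0 < a + b := by linarith
  calc a ^ θ * b ^ (s - θ) ≤ (a + b) ^ θ * (a + b) ^ (s - θ) := by
        gcongr
        · linarith
        · linarith
    _ = (a + b) ^ s := by rw [← rpow_add hab, add_sub_cancel]

theorem rpow_div_add_rpow_le {a b θ s : ℝ} (ha : 0 ≤ a) (hb : 0 < b) (hθ : 0 ≤ θ)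
    (hθs : θ ≤ s) : a ^ θ / (a + b) ^ s ≤ b ^ (θ - s) := by
  have hab : 0 < a + b := by linarith
  rw [div_le_iff₀ (rpow_pos_of_pos hab s), ← neg_sub, rpow_neg hb.le, inv_mul_eq_div,
    le_div_iff₀ (rpow_pos_of_pos hb _)]
  exact rpow_mul_rpow_sub_le_add_rpow ha hb hθ hθs

end Real

theorem stmt_0_general (T t lam mu : ℝ) (hT : 0 < T) (ht0 : 0 ≤ t) (htT : t ≤ T)
    (hlam : 0 < lam) :
    Real.exp (-2 * t * mu) / (Real.exp (-2 * T * mu) + lam) ^ 2 ≤ lam ^ (t / T - 2) := by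
  have hexp : Real.exp (-2 * t * mu) = Real.exp (-2 * T * mu) ^ (t / T) := by
    rw [← exp_mul]
    congr 1
    field_simp
  have hθ : t / T ≤ 2 := by linarith [(div_le_one hT).2 htT]
  rw [hexp, ← rpow_two]
  exact rpow_div_add_rpow_le (exp_pos _).le hlam (div_nonneg ht0 hT.le) hθ

/-- Pointwise spectral inequality underlying Lemma 3.1:
`exp(-2tμ) / (exp(-2Tμ) + λ)² ≤ λ^(t/T - 2)`. -/
theorem stmt_0 (T t lam mu : ℝ) (hT : 0 < T) (ht0 : 0 ≤ t) (htT : t ≤ T)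
    (hlam : 0 < lam) (hmu : 0 ≤ mu) :
    Real.exp (-2 * t * mu) / (Real.exp (-2 * T * mu) + lam) ^ 2 ≤ lam ^ (t / T - 2) :=
  stmt_0_general T t lam mu hT ht0 htT hlam
end

section
/- Let T > 0, let t satisfy 0 ≤ t ≤ T, and let λ > 0. Let μ : ℕ → ℝ with μ_k ≥ 0 for all k, and let u : ℕ → ℝ be such that ∑_k u_k^2 is summable. Then the series ∑_k exp(-2*t*μ_k)/(exp(-2*T*μ_k) + λ)^2 * u_k^2 is summable and its sum is at most λ^(t/T - 2) * ∑_k u_k^2. (This expresses the operator-norm bound ‖K_t‖^2 ≤ 1/λ^(2 - t/T) of Lemma 3.1.) -/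
open Real

/-!
Each Fourier weight `exp (-2tμ) / (exp (-2Tμ) + λ)²` is `x ^ θ / (x + λ)²` with `x = exp (-2Tμ) > 0`
and `θ = t / T ∈ [0, 1]`; splitting this as `(x / (x + λ)) ^ θ * (x + λ) ^ (θ - 2)` bounds it by
`λ ^ (θ - 2)` uniformly in `x ≥ 0`, and a uniformly bounded weight scales an `ℓ²` sum by at most
that bound.
-/

lemma rpow_div_add_sq_le {x lam θ : ℝ} (hx : 0 ≤ x) (hlam : 0 < lam) (hθ0 : 0 ≤ θ) (hθ2 : θ ≤ 2) :
    x ^ θ / (x + lam) ^ 2 ≤ lam ^ (θ - 2) := by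
  have hxl : 0 < x + lam := by linarith
  have hsplit : x ^ θ / (x + lam) ^ 2 = (x / (x + lam)) ^ θ * (x + lam) ^ (θ - 2) := by
    rw [div_rpow hx hxl.le, rpow_sub hxl, rpow_two]
    field_simp
  have hratio : (x / (x + lam)) ^ θ ≤ 1 :=
    rpow_le_one (by positivity) ((div_le_one hxl).2 (by linarith)) hθ0
  have hpow : (x + lam) ^ (θ - 2) ≤ lam ^ (θ - 2) :=
    rpow_le_rpow_of_nonpos hlam (by linarith) (by linarith)
  calc x ^ θ / (x + lam) ^ 2 = (x / (x + lam)) ^ θ * (x + lam) ^ (θ - 2) := hsplit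
    _ ≤ 1 * lam ^ (θ - 2) := mul_le_mul hratio hpow (by positivity) zero_le_one
    _ = lam ^ (θ - 2) := one_mul _

lemma summable_mul_and_tsum_mul_le {ι : Type*} {w a : ι → ℝ} {C : ℝ} (hw0 : ∀ k, 0 ≤ w k)
    (hwC : ∀ k, w k ≤ C) (ha0 : ∀ k, 0 ≤ a k) (ha : Summable a) :
    Summable (fun k => w k * a k) ∧ ∑' k, w k * a k ≤ C * ∑' k, a k := by
  have hle : ∀ k, w k * a k ≤ C * a k := fun k => mul_le_mul_of_nonneg_right (hwC k) (ha0 k)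
  have hsum : Summable (fun k => w k * a k) :=
    (ha.mul_left C).of_nonneg_of_le (fun k => mul_nonneg (hw0 k) (ha0 k)) hle
  refine ⟨hsum, ?_⟩
  calc ∑' k, w k * a k ≤ ∑' k, C * a k := hsum.tsum_le_tsum hle (ha.mul_left C)
    _ = C * ∑' k, a k := tsum_mul_left

lemma exp_mul_eq_exp_rpow_div {t T c : ℝ} (hT : T ≠ 0) :
    exp (c * t) = exp (c * T) ^ (t / T) := by
  rw [← exp_mul]
  field_simp

theorem stmt_1_general (T t lam : ℝ) (hT : 0 < T) (ht0 : 0 ≤ t) (htT : t ≤ T) (hlam : 0 < lam)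
    (mu u : ℕ → ℝ)
    (hu : Summable fun k => (u k) ^ 2) :
    Summable (fun k =>
      Real.exp (-2 * t * mu k) / (Real.exp (-2 * T * mu k) + lam) ^ 2 * (u k) ^ 2) ∧
    ∑' k, Real.exp (-2 * t * mu k) / (Real.exp (-2 * T * mu k) + lam) ^ 2 * (u k) ^ 2
      ≤ lam ^ (t / T - 2) * ∑' k, (u k) ^ 2 := by
  have hθ0 : 0 ≤ t / T := div_nonneg ht0 hT.le
  have hθ2 : t / T ≤ 2 := ((div_le_one hT).2 htT).trans one_le_two
  have hweight : ∀ k, exp (-2 * t * mu k) / (exp (-2 * T * mu k) + lam) ^ 2 ≤ lam ^ (t / T - 2) := by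
    intro k
    have hexp : exp (-2 * t * mu k) = exp (-2 * T * mu k) ^ (t / T) := by
      simpa only [mul_right_comm] using exp_mul_eq_exp_rpow_div (c := -2 * mu k) hT.ne'
    rw [hexp]
    exact rpow_div_add_sq_le (exp_pos _).le hlam hθ0 hθ2
  exact summable_mul_and_tsum_mul_le (fun k => by positivity) hweight (fun k => sq_nonneg _) hu

/-- Operator-norm bound `‖K_t‖² ≤ λ^(t/T - 2)` of Lemma 3.1, in spectral form. -/
theorem stmt_1 (T t lam : ℝ) (hT : 0 < T) (ht0 : 0 ≤ t) (htT : t ≤ T) (hlam : 0 < lam)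
    (mu u : ℕ → ℝ) (hmu : ∀ k, 0 ≤ mu k)
    (hu : Summable fun k => (u k) ^ 2) :
    Summable (fun k =>
      Real.exp (-2 * t * mu k) / (Real.exp (-2 * T * mu k) + lam) ^ 2 * (u k) ^ 2) ∧
    ∑' k, Real.exp (-2 * t * mu k) / (Real.exp (-2 * T * mu k) + lam) ^ 2 * (u k) ^ 2
      ≤ lam ^ (t / T - 2) * ∑' k, (u k) ^ 2 :=
  stmt_1_general T t lam hT ht0 htT hlam mu u hu
end

section
/- Let T > 0, let t satisfy 0 ≤ t ≤ T, let λ > 0 and μ ≥ 0 be real numbers. Then exp(-2*t*μ) * exp(-2*T*μ) / (exp(-2*T*μ) + λ)^2 ≤ λ^(t/T - 1), where the power on the right is the real power function. -/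
/-!
Put `e = exp(-2Tμ) ∈ (0, 1]` and `α = t / T ∈ [0, 1]`, so that `exp(-2tμ) = e ^ α`. The claim becomes
`e ^ (1 + α) * λ ^ (1 - α) ≤ (e + λ) ^ 2`, the square of the weighted AM-GM inequality
`e ^ ((1 + α) / 2) * λ ^ ((1 - α) / 2) ≤ (1 + α) / 2 * e + (1 - α) / 2 * λ ≤ e + λ`.
-/

open Real

namespace Real

lemma rpow_mul_rpow_le_add {a b p q : ℝ} (ha : 0 ≤ a) (hb : 0 ≤ b) (hp : 0 ≤ p) (hq : 0 ≤ q)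
    (hpq : p + q = 1) : a ^ p * b ^ q ≤ a + b :=
  calc a ^ p * b ^ q ≤ p * a + q * b := geom_mean_le_arith_mean2_weighted hp hq ha hb hpq
    _ ≤ a + b := by nlinarith [mul_nonneg hq ha, mul_nonneg hp hb]

lemma rpow_one_add_mul_rpow_one_sub_le_add_sq {a b α : ℝ} (ha : 0 ≤ a) (hb : 0 ≤ b)
    (hα₀ : -1 ≤ α) (hα₁ : α ≤ 1) : a ^ (1 + α) * b ^ (1 - α) ≤ (a + b) ^ 2 :=
  calc a ^ (1 + α) * b ^ (1 - α) = (a ^ ((1 + α) / 2) * b ^ ((1 - α) / 2)) ^ 2 := by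
        rw [mul_pow, ← rpow_mul_natCast ha, ← rpow_mul_natCast hb]
        ring_nf
    _ ≤ (a + b) ^ 2 := by
        gcongr
        exact rpow_mul_rpow_le_add ha hb (by linarith) (by linarith) (by ring)

lemma rpow_mul_self_div_add_sq_le {a b α : ℝ} (ha : 0 < a) (hb : 0 < b)
    (hα₀ : -1 ≤ α) (hα₁ : α ≤ 1) : a ^ α * a / (a + b) ^ 2 ≤ b ^ (α - 1) := by
  rw [div_le_iff₀ (by positivity)]
  calc a ^ α * a = b ^ (α - 1) * (a ^ (1 + α) * b ^ (1 - α)) := by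
        rw [add_comm, rpow_add_one ha.ne', mul_left_comm, mul_comm (b ^ (α - 1)), mul_assoc, ← rpow_add hb]
        simp
    _ ≤ b ^ (α - 1) * (a + b) ^ 2 := by
        gcongr
        exact rpow_one_add_mul_rpow_one_sub_le_add_sq ha.le hb.le hα₀ hα₁

end Real

theorem stmt_2_general (T t lam mu : ℝ) (hT : 0 < T) (ht0 : 0 ≤ t) (htT : t ≤ T)
    (hlam : 0 < lam) :
    Real.exp (-2 * t * mu) * Real.exp (-2 * T * mu) / (Real.exp (-2 * T * mu) + lam) ^ 2
      ≤ lam ^ (t / T - 1) := by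
  have hexp : exp (-2 * t * mu) = exp (-2 * T * mu) ^ (t / T) := by
    rw [← exp_mul]
    field_simp
  rw [hexp]
  exact rpow_mul_self_div_add_sq_le (exp_pos _) hlam
    (by linarith [div_nonneg ht0 hT.le]) ((div_le_one hT).mpr htT)

/-- Pointwise spectral inequality underlying Lemma 3.2:
`exp(-2tμ)·exp(-2Tμ) / (exp(-2Tμ) + λ)² ≤ λ^(t/T - 1)`. -/
theorem stmt_2 (T t lam mu : ℝ) (hT : 0 < T) (ht0 : 0 ≤ t) (htT : t ≤ T)
    (hlam : 0 < lam) (hmu : 0 ≤ mu) :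
    Real.exp (-2 * t * mu) * Real.exp (-2 * T * mu) / (Real.exp (-2 * T * mu) + lam) ^ 2
      ≤ lam ^ (t / T - 1) :=
  stmt_2_general T t lam mu hT ht0 htT hlam
end

section
/- Let T > 0, let t satisfy 0 ≤ t ≤ T, and let λ > 0. Let μ : ℕ → ℝ with μ_k ≥ 0 for all k, and let u : ℕ → ℝ be such that ∑_k u_k^2 is summable. Then the series ∑_k exp(-2*t*μ_k) * exp(-2*T*μ_k)/(exp(-2*T*μ_k) + λ)^2 * u_k^2 is summable and its sum is at most λ^(t/T - 1) * ∑_k u_k^2. (This expresses the operator-norm bound ‖F_T (F_T* F_T + λ I)^{-1} F_t‖^2 ≤ λ^(t/T - 1) of Lemma 3.2.) -/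
/-!
With `a = exp (-2 T μ_k)` and `s = t / T ∈ [0, 1]`, the `k`-th coefficient is
`a ^ (1 + s) / (a + λ) ^ 2`. Squaring the weighted AM-GM inequality
`a ^ θ λ ^ (1 - θ) ≤ a + λ` with `θ = (1 + s) / 2` bounds it by `λ ^ (s - 1)` uniformly in `k`.
-/

open Real

lemma rpow_mul_rpow_le_add_sq {a b s : ℝ} (ha : 0 ≤ a) (hb : 0 ≤ b) (hs₀ : -1 ≤ s)
    (hs₁ : s ≤ 1) : a ^ (1 + s) * b ^ (1 - s) ≤ (a + b) ^ 2 := by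
  set θ := (1 + s) / 2 with hθ
  have hθ₀ : 0 ≤ θ := by linarith
  have hθ₁ : θ ≤ 1 := by linarith
  have hgm : a ^ θ * b ^ (1 - θ) ≤ θ * a + (1 - θ) * b :=
    geom_mean_le_arith_mean2_weighted hθ₀ (by linarith) ha hb (by ring)
  have hle : a ^ θ * b ^ (1 - θ) ≤ a + b := by nlinarith
  calc a ^ (1 + s) * b ^ (1 - s)
      = (a ^ θ * b ^ (1 - θ)) ^ 2 := by
        rw [mul_pow, ← rpow_mul_natCast ha, ← rpow_mul_natCast hb]
        congr 2 <;> push_cast <;> ring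
    _ ≤ (a + b) ^ 2 := pow_le_pow_left₀ (by positivity) hle 2

lemma rpow_mul_div_add_sq_le {a lam s : ℝ} (ha : 0 < a) (hlam : 0 < lam) (hs₀ : -1 ≤ s)
    (hs₁ : s ≤ 1) : a ^ s * a / (a + lam) ^ 2 ≤ lam ^ (s - 1) := by
  have hamgm := rpow_mul_rpow_le_add_sq ha.le hlam.le hs₀ hs₁
  rw [div_le_iff₀ (by positivity), ← rpow_add_one ha.ne', add_comm s 1]
  calc a ^ (1 + s) = lam ^ (s - 1) * (a ^ (1 + s) * lam ^ (1 - s)) := by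
        rw [mul_left_comm, ← rpow_add hlam]
        norm_num
    _ ≤ lam ^ (s - 1) * (a + lam) ^ 2 := by gcongr

lemma Summable.summable_mul_and_tsum_mul_le {ι : Type*} {f g : ι → ℝ} {C : ℝ}
    (hg : Summable g) (hg₀ : ∀ k, 0 ≤ g k) (hf₀ : ∀ k, 0 ≤ f k)
    (hfC : ∀ k, f k ≤ C) :
    Summable (fun k => f k * g k) ∧ ∑' k, f k * g k ≤ C * ∑' k, g k := by
  have hle : ∀ k, f k * g k ≤ C * g k := fun k => mul_le_mul_of_nonneg_right (hfC k) (hg₀ k)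
  have hsum : Summable (fun k => f k * g k) :=
    (hg.mul_left C).of_nonneg_of_le (fun k => mul_nonneg (hf₀ k) (hg₀ k)) hle
  exact ⟨hsum, (hsum.tsum_le_tsum hle (hg.mul_left C)).trans_eq tsum_mul_left⟩

theorem stmt_3_general (T t lam : ℝ) (hT : 0 < T) (ht0 : 0 ≤ t) (htT : t ≤ T) (hlam : 0 < lam)
    (mu u : ℕ → ℝ)
    (hu : Summable fun k => (u k) ^ 2) :
    Summable (fun k =>
      Real.exp (-2 * t * mu k) * Real.exp (-2 * T * mu k) /
        (Real.exp (-2 * T * mu k) + lam) ^ 2 * (u k) ^ 2) ∧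
    ∑' k, Real.exp (-2 * t * mu k) * Real.exp (-2 * T * mu k) /
        (Real.exp (-2 * T * mu k) + lam) ^ 2 * (u k) ^ 2
      ≤ lam ^ (t / T - 1) * ∑' k, (u k) ^ 2 := by
  refine hu.summable_mul_and_tsum_mul_le (fun k => sq_nonneg _) (fun k => by positivity)
    fun k => ?_
  have hexp : exp (-2 * t * mu k) = exp (-2 * T * mu k) ^ (t / T) := by
    rw [← exp_mul]
    congr 1
    field_simp
  rw [hexp]
  exact rpow_mul_div_add_sq_le (exp_pos _) hlam
    (by linarith [div_nonneg ht0 hT.le]) ((div_le_one hT).mpr htT)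

/-- Operator-norm bound `‖F_T (F_T* F_T + λI)⁻¹ F_t‖² ≤ λ^(t/T - 1)` of Lemma 3.2,
in spectral form. -/
theorem stmt_3 (T t lam : ℝ) (hT : 0 < T) (ht0 : 0 ≤ t) (htT : t ≤ T) (hlam : 0 < lam)
    (mu u : ℕ → ℝ) (hmu : ∀ k, 0 ≤ mu k)
    (hu : Summable fun k => (u k) ^ 2) :
    Summable (fun k =>
      Real.exp (-2 * t * mu k) * Real.exp (-2 * T * mu k) /
        (Real.exp (-2 * T * mu k) + lam) ^ 2 * (u k) ^ 2) ∧
    ∑' k, Real.exp (-2 * t * mu k) * Real.exp (-2 * T * mu k) /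
        (Real.exp (-2 * T * mu k) + lam) ^ 2 * (u k) ^ 2
      ≤ lam ^ (t / T - 1) * ∑' k, (u k) ^ 2 :=
  stmt_3_general T t lam hT ht0 htT hlam mu u hu
end

section
/- Let T > 0, let t satisfy 0 ≤ t ≤ T, let λ > 0 and μ ≥ 0 be real numbers. Then λ^2 * exp(-2*t*μ) / (exp(-2*T*μ) + λ)^2 ≤ λ^(t/T). Consequently, for μ : ℕ → ℝ nonnegative and u : ℕ → ℝ with ∑_k u_k^2 summable, ∑_k λ^2 * exp(-2*t*μ_k)/(exp(-2*T*μ_k) + λ)^2 * u_k^2 ≤ λ^(t/T) * ∑_k u_k^2. (This is the spectral form of the estimate ‖K_t(λ f*)‖ ≤ λ^(t/2T) ‖f*‖ for the bias term II in the proof of the main theorem.) -/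
open Real

lemma stmt_4_aux (T t lam : ℝ) (hT : 0 < T) (ht0 : 0 ≤ t) (htT : t ≤ T)
    (hlam : 0 < lam) (mu : ℝ) (_hmu : 0 ≤ mu) :
    lam ^ 2 * Real.exp (-2 * t * mu) / (Real.exp (-2 * T * mu) + lam) ^ 2
      ≤ lam ^ (t / T) := by
  set a := Real.exp (-2 * T * mu) with ha_def
  have ha : 0 < a := Real.exp_pos _
  set θ := t / T with hθ_def
  have hθ0 : 0 ≤ θ := div_nonneg ht0 hT.le
  have hθ1 : θ ≤ 1 := (div_le_one hT).mpr htT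
  have hb : 0 < a + lam := by positivity
  have hea : Real.exp (-2 * t * mu) = a ^ θ := by
    rw [ha_def, ← Real.exp_log (Real.rpow_pos_of_pos (Real.exp_pos _) θ),
      Real.log_rpow (Real.exp_pos _), Real.log_exp]
    congr 1
    rw [hθ_def, show t / T * (-2 * T * mu) = T / T * (-2 * t * mu) by ring,
      div_self hT.ne', one_mul]
  rw [hea, div_le_iff₀ (by positivity)]
  have h1 : a ^ θ ≤ (a + lam) ^ θ :=
    Real.rpow_le_rpow ha.le (by linarith) hθ0
  have h2 : lam ^ ((2:ℝ) - θ) ≤ (a + lam) ^ ((2:ℝ) - θ) :=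
    Real.rpow_le_rpow hlam.le (by linarith) (by linarith)
  have key : lam ^ ((2:ℝ) - θ) * a ^ θ ≤ (a + lam) ^ 2 := by
    calc lam ^ ((2:ℝ) - θ) * a ^ θ
        ≤ (a + lam) ^ ((2:ℝ) - θ) * (a + lam) ^ θ :=
          mul_le_mul h2 h1 (Real.rpow_nonneg ha.le θ) (Real.rpow_nonneg hb.le _)
      _ = (a + lam) ^ ((2:ℝ)) := by rw [← Real.rpow_add hb]; ring_nf
      _ = (a + lam) ^ 2 := by rw [Real.rpow_two]
  calc lam ^ 2 * a ^ θ = lam ^ θ * (lam ^ ((2:ℝ) - θ) * a ^ θ) := by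
        rw [← mul_assoc, ← Real.rpow_add hlam]
        norm_num
    _ ≤ lam ^ θ * (a + lam) ^ 2 :=
        mul_le_mul_of_nonneg_left key (Real.rpow_nonneg hlam.le θ)

/-- Spectral form of the bias estimate `‖K_t(λ f*)‖ ≤ λ^(t/2T) ‖f*‖` (term II of the
main theorem): pointwise bound `λ²·exp(-2tμ)/(exp(-2Tμ)+λ)² ≤ λ^(t/T)` and the
consequent summed bound. -/
theorem stmt_4 (T t lam : ℝ) (hT : 0 < T) (ht0 : 0 ≤ t) (htT : t ≤ T) (hlam : 0 < lam) :
    (∀ mu : ℝ, 0 ≤ mu →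
      lam ^ 2 * Real.exp (-2 * t * mu) / (Real.exp (-2 * T * mu) + lam) ^ 2
        ≤ lam ^ (t / T)) ∧
    (∀ mu u : ℕ → ℝ, (∀ k, 0 ≤ mu k) → (Summable fun k => (u k) ^ 2) →
      Summable (fun k =>
        lam ^ 2 * Real.exp (-2 * t * mu k) / (Real.exp (-2 * T * mu k) + lam) ^ 2
          * (u k) ^ 2) ∧
      ∑' k, lam ^ 2 * Real.exp (-2 * t * mu k) / (Real.exp (-2 * T * mu k) + lam) ^ 2
          * (u k) ^ 2
        ≤ lam ^ (t / T) * ∑' k, (u k) ^ 2) := by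
  have hpt := stmt_4_aux T t lam hT ht0 htT hlam
  refine ⟨hpt, fun mu u hmu hsum => ?_⟩
  have hbound : ∀ k,
      lam ^ 2 * Real.exp (-2 * t * mu k) / (Real.exp (-2 * T * mu k) + lam) ^ 2
        * (u k) ^ 2 ≤ lam ^ (t / T) * (u k) ^ 2 := fun k =>
    mul_le_mul_of_nonneg_right (hpt (mu k) (hmu k)) (sq_nonneg _)
  have hnn : ∀ k, 0 ≤
      lam ^ 2 * Real.exp (-2 * t * mu k) / (Real.exp (-2 * T * mu k) + lam) ^ 2
        * (u k) ^ 2 := fun k => by positivity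
  have hs : Summable (fun k =>
      lam ^ 2 * Real.exp (-2 * t * mu k) / (Real.exp (-2 * T * mu k) + lam) ^ 2
        * (u k) ^ 2) :=
    Summable.of_nonneg_of_le hnn hbound (hsum.mul_left _)
  refine ⟨hs, ?_⟩
  rw [← tsum_mul_left]
  exact Summable.tsum_le_tsum hbound hs (hsum.mul_left _)
end

section
/- Let (Ω, P) be a probability space, n ≥ 1, and let e₁, …, eₙ : Ω → ℝ be independent square-integrable random variables with E[eᵢ] = 0 and Var(eᵢ) ≤ σ² for every i. Let w₁, …, wₙ be real numbers with wᵢ² ≤ B/n for some B > 0, and let v₁, …, vₙ ∈ ℝⁿ be vectors orthonormal with respect to the weighted inner product ⟨x, y⟩_w = ∑ᵢ wᵢ² xᵢ yᵢ, i.e. ∑ᵢ wᵢ² (v_k)ᵢ (v_l)ᵢ = δ_{kl}. Let λ > 0, c > 0 and d ∈ {1,2,3}, and let β₁, …, βₙ be real numbers with β_k ≥ c * k^{4/d} for every k. Then E[∑_{k=1}^n (1 + λ β_k)^{-1} (∑ᵢ wᵢ² eᵢ (v_k)ᵢ)²] ≤ (B σ²/n) * (4/(4-d)) * (c λ)^{-d/4},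 with real powers. -/
/-!
Independence and zero means kill the cross terms, so
`E[(∑ᵢ wᵢ² eᵢ (v_k)ᵢ)²] = ∑ᵢ wᵢ⁴ (v_k)ᵢ² Var eᵢ ≤ (B σ² / n) ∑ᵢ wᵢ² (v_k)ᵢ² = B σ² / n`.
It remains to bound `∑_k (1 + λ β_k)⁻¹ ≤ ∑_k (1 + μ k^p)⁻¹` with `μ = c λ`, `p = 4 / d > 1`.
The summand is decreasing in `k`, so the sum is at most `∫₀^∞ (1 + μ t^p)⁻¹ dt`; bounding the
integrand by `1` up to `t₀ = μ^(-1/p)` and by `μ⁻¹ t^(-p)` beyond gives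
`t₀ + t₀ / (p - 1) = p / (p - 1) · μ^(-1/p)`.
-/

open MeasureTheory ProbabilityTheory Set

section RpowTail

variable {μ p : ℝ}

lemma inv_one_add_mul_rpow_le_one (hμ : 0 ≤ μ) {t : ℝ} (ht : 0 ≤ t) :
    (1 + μ * t ^ p)⁻¹ ≤ 1 :=
  inv_le_one_of_one_le₀ (le_add_of_nonneg_right (by positivity))

lemma inv_one_add_mul_rpow_le_inv_mul_rpow_neg (hμ : 0 < μ) {t : ℝ} (ht : 0 < t) :
    (1 + μ * t ^ p)⁻¹ ≤ μ⁻¹ * t ^ (-p) := by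
  rw [Real.rpow_neg ht.le, ← mul_inv]
  exact inv_anti₀ (by positivity) (by linarith)

lemma antitoneOn_inv_one_add_mul_rpow (hμ : 0 ≤ μ) (hp : 0 ≤ p) :
    AntitoneOn (fun t : ℝ => (1 + μ * t ^ p)⁻¹) (Ici 0) := fun s hs t _ hst =>
  inv_anti₀ (by have := Real.rpow_nonneg hs p; positivity) (by gcongr)

lemma integrableOn_Ioc_inv_one_add_mul_rpow (hμ : 0 ≤ μ) (a : ℝ) :
    IntegrableOn (fun t : ℝ => (1 + μ * t ^ p)⁻¹) (Ioc 0 a) :=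
  IntegrableOn.of_bound measure_Ioc_lt_top
    (by fun_prop : Measurable fun t : ℝ => (1 + μ * t ^ p)⁻¹).aestronglyMeasurable 1 <|
    (ae_restrict_mem measurableSet_Ioc).mono fun t ht => by
      rw [Real.norm_of_nonneg (by have := Real.rpow_nonneg ht.1.le p; positivity)]
      exact inv_one_add_mul_rpow_le_one hμ ht.1.le

lemma integrableOn_Ioi_inv_one_add_mul_rpow (hμ : 0 < μ) (hp : 1 < p) {a : ℝ} (ha : 0 < a) :
    IntegrableOn (fun t : ℝ => (1 + μ * t ^ p)⁻¹) (Ioi a) :=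
  Integrable.mono' ((integrableOn_Ioi_rpow_of_lt (a := -p) (by linarith) ha).const_mul μ⁻¹)
    (by fun_prop : Measurable fun t : ℝ => (1 + μ * t ^ p)⁻¹).aestronglyMeasurable <|
    (ae_restrict_mem measurableSet_Ioi).mono fun t ht => by
      have ht₀ : 0 < t := ha.trans ht
      rw [Real.norm_of_nonneg (by have := Real.rpow_nonneg ht₀.le p; positivity)]
      exact inv_one_add_mul_rpow_le_inv_mul_rpow_neg hμ ht₀

lemma integral_Ioi_inv_one_add_mul_rpow_le (hμ : 0 < μ) (hp : 1 < p) :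
    ∫ t in Ioi 0, (1 + μ * t ^ p)⁻¹ ≤ p / (p - 1) * μ ^ (-1 / p) := by
  have hp₁ : p - 1 ≠ 0 := by linarith
  set t₀ := μ ^ (-1 / p)
  have ht₀ : 0 < t₀ := Real.rpow_pos_of_pos hμ _
  -- `t₀` is where the two bounds `1` and `μ⁻¹ t^(-p)` of the integrand cross
  have ht₀_rpow : t₀ ^ (-p) = μ := by
    rw [← Real.rpow_mul hμ.le, div_mul_eq_mul_div, neg_one_mul, neg_neg,
      div_self (by linarith), Real.rpow_one]
  have hhead : ∫ t in Ioc 0 t₀, (1 + μ * t ^ p)⁻¹ ≤ t₀ := by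
    calc ∫ t in Ioc 0 t₀, (1 + μ * t ^ p)⁻¹ ≤ ∫ _ in Ioc 0 t₀, (1 : ℝ) :=
          setIntegral_mono_on (integrableOn_Ioc_inv_one_add_mul_rpow hμ.le t₀)
            (integrableOn_const measure_Ioc_lt_top.ne) measurableSet_Ioc
            fun t ht => inv_one_add_mul_rpow_le_one hμ.le ht.1.le
      _ = t₀ := by simp [ht₀.le]
  have htail : ∫ t in Ioi t₀, (1 + μ * t ^ p)⁻¹ ≤ t₀ / (p - 1) := by
    calc ∫ t in Ioi t₀, (1 + μ * t ^ p)⁻¹ ≤ ∫ t in Ioi t₀, μ⁻¹ * t ^ (-p) :=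
          setIntegral_mono_on (integrableOn_Ioi_inv_one_add_mul_rpow hμ hp ht₀)
            ((integrableOn_Ioi_rpow_of_lt (a := -p) (by linarith) ht₀).const_mul μ⁻¹)
            measurableSet_Ioi
            fun t ht => inv_one_add_mul_rpow_le_inv_mul_rpow_neg hμ (ht₀.trans ht)
      _ = t₀ / (p - 1) := by
          rw [integral_const_mul, integral_Ioi_rpow_of_lt (by linarith) ht₀,
            Real.rpow_add ht₀, Real.rpow_one, ht₀_rpow, show -p + 1 = -(p - 1) by ring,
            div_neg, neg_div, neg_neg]
          field_simp
  calc ∫ t in Ioi 0, (1 + μ * t ^ p)⁻¹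
      = (∫ t in Ioc 0 t₀, (1 + μ * t ^ p)⁻¹) + ∫ t in Ioi t₀, (1 + μ * t ^ p)⁻¹ := by
        rw [← Ioc_union_Ioi_eq_Ioi ht₀.le]
        exact setIntegral_union (Ioc_disjoint_Ioi le_rfl) measurableSet_Ioi
          (integrableOn_Ioc_inv_one_add_mul_rpow hμ.le t₀)
          (integrableOn_Ioi_inv_one_add_mul_rpow hμ hp ht₀)
    _ ≤ t₀ + t₀ / (p - 1) := add_le_add hhead htail
    _ = p / (p - 1) * t₀ := by field_simp; ring

lemma sum_range_inv_one_add_mul_rpow_le (hμ : 0 < μ) (hp : 1 < p) (n : ℕ) :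
    ∑ k ∈ Finset.range n, (1 + μ * ((k : ℝ) + 1) ^ p)⁻¹ ≤ p / (p - 1) * μ ^ (-1 / p) := by
  have hint : IntegrableOn (fun t : ℝ => (1 + μ * t ^ p)⁻¹) (Ioi 0) := by
    rw [← Ioc_union_Ioi_eq_Ioi zero_le_one]
    exact (integrableOn_Ioc_inv_one_add_mul_rpow hμ.le 1).union
      (integrableOn_Ioi_inv_one_add_mul_rpow hμ hp one_pos)
  calc ∑ k ∈ Finset.range n, (1 + μ * ((k : ℝ) + 1) ^ p)⁻¹
      ≤ ∫ t in (0 : ℝ)..n, (1 + μ * t ^ p)⁻¹ := by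
        have hanti := (antitoneOn_inv_one_add_mul_rpow hμ.le (by linarith : 0 ≤ p)).mono
          (Icc_subset_Ici_self : Icc (0 : ℝ) (0 + n) ⊆ Ici 0)
        simpa using hanti.sum_le_integral
    _ ≤ ∫ t in Ioi 0, (1 + μ * t ^ p)⁻¹ := by
        rw [intervalIntegral.integral_of_le n.cast_nonneg]
        refine setIntegral_mono_set hint ?_ Ioc_subset_Ioi_self.eventuallyLE
        filter_upwards [ae_restrict_mem measurableSet_Ioi] with t ht
        have := Real.rpow_nonneg (le_of_lt ht) p
        positivity
    _ ≤ p / (p - 1) * μ ^ (-1 / p) := integral_Ioi_inv_one_add_mul_rpow_le hμ hp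

end RpowTail

lemma sum_inv_one_add_mul_le_of_rpow_le {n : ℕ} {β : Fin n → ℝ} {c lam p : ℝ}
    (hc : 0 < c) (hlam : 0 < lam) (hp : 1 < p)
    (hβ : ∀ k : Fin n, c * ((k : ℕ) + 1 : ℝ) ^ p ≤ β k) :
    ∑ k, (1 + lam * β k)⁻¹ ≤ p / (p - 1) * (c * lam) ^ (-1 / p) := by
  calc ∑ k, (1 + lam * β k)⁻¹ ≤ ∑ k : Fin n, (1 + c * lam * ((k : ℕ) + 1 : ℝ) ^ p)⁻¹ :=
        Finset.sum_le_sum fun k _ => inv_anti₀ (by positivity) <| by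
          linarith [mul_le_mul_of_nonneg_left (hβ k) hlam.le]
    _ = ∑ k ∈ Finset.range n, (1 + c * lam * ((k : ℝ) + 1) ^ p)⁻¹ :=
        Fin.sum_univ_eq_sum_range (fun k => (1 + c * lam * ((k : ℝ) + 1) ^ p)⁻¹) n
    _ ≤ p / (p - 1) * (c * lam) ^ (-1 / p) :=
        sum_range_inv_one_add_mul_rpow_le (mul_pos hc hlam) hp n

section Noise

variable {Ω ι : Type*} [MeasurableSpace Ω] {P : Measure Ω} [IsProbabilityMeasure P]
  [Fintype ι] {e : ι → Ω → ℝ}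

lemma integral_sq_sum_mul_eq_sum_sq_mul_variance
    (hindep : Pairwise fun i j => e i ⟂ᵢ[P] e j) (hL2 : ∀ i, MemLp (e i) 2 P)
    (hmean : ∀ i, ∫ ω, e i ω ∂P = 0) (a : ι → ℝ) :
    ∫ ω, (∑ i, a i * e i ω) ^ 2 ∂P = ∑ i, a i ^ 2 * variance (e i) P := by
  have hL2' : ∀ i, MemLp (fun ω => a i * e i ω) 2 P := fun i => (hL2 i).const_mul (a i)
  have hsum_mean : ∫ ω, ∑ i, a i * e i ω ∂P = 0 := by
    rw [integral_finsetSum _ fun i _ => (hL2' i).integrable one_le_two]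
    simp [integral_const_mul, hmean]
  calc ∫ ω, (∑ i, a i * e i ω) ^ 2 ∂P
      = variance (∑ i, fun ω => a i * e i ω) P := by
        rw [variance_of_integral_eq_zero]
        · simp
        · exact (memLp_finsetSum' _ fun i _ => hL2' i).aemeasurable
        · simpa using hsum_mean
    _ = ∑ i, a i ^ 2 * variance (e i) P := by
        rw [IndepFun.variance_sum (fun i _ => hL2' i)
          fun i _ j _ hij => (hindep hij).comp (measurable_const_mul _) (measurable_const_mul _)]
        simp [variance_const_mul]

lemma sum_sq_weighted_mul_le {w x s : ι → ℝ} {b S : ℝ} (hw : ∀ i, w i ^ 2 ≤ b)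
    (hs : ∀ i, 0 ≤ s i) (hsS : ∀ i, s i ≤ S) :
    ∑ i, (w i ^ 2 * x i) ^ 2 * s i ≤ b * S * ∑ i, w i ^ 2 * x i * x i := by
  rw [Finset.mul_sum]
  refine Finset.sum_le_sum fun i _ => ?_
  have hb : 0 ≤ b := (sq_nonneg _).trans (hw i)
  calc (w i ^ 2 * x i) ^ 2 * s i = (w i ^ 2 * s i) * (w i ^ 2 * x i * x i) := by ring
    _ ≤ (b * S) * (w i ^ 2 * x i * x i) :=
        mul_le_mul_of_nonneg_right (mul_le_mul (hw i) (hsS i) (hs i) hb)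
          (by rw [mul_assoc]; exact mul_nonneg (sq_nonneg _) (mul_self_nonneg _))

lemma integral_sq_weighted_pairing_le
    (hindep : Pairwise fun i j => e i ⟂ᵢ[P] e j) (hL2 : ∀ i, MemLp (e i) 2 P)
    (hmean : ∀ i, ∫ ω, e i ω ∂P = 0) {σ : ℝ} (hvar : ∀ i, variance (e i) P ≤ σ ^ 2)
    {w v : ι → ℝ} {b : ℝ} (hw : ∀ i, w i ^ 2 ≤ b) (hv : ∑ i, w i ^ 2 * v i * v i = 1) :
    ∫ ω, (∑ i, w i ^ 2 * e i ω * v i) ^ 2 ∂P ≤ b * σ ^ 2 := by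
  calc ∫ ω, (∑ i, w i ^ 2 * e i ω * v i) ^ 2 ∂P
      = ∑ i, (w i ^ 2 * v i) ^ 2 * variance (e i) P := by
        rw [← integral_sq_sum_mul_eq_sum_sq_mul_variance hindep hL2 hmean]
        simp only [mul_right_comm _ (e _ _)]
    _ ≤ b * σ ^ 2 * ∑ i, w i ^ 2 * v i * v i :=
        sum_sq_weighted_mul_le hw (fun i => variance_nonneg _ _) hvar
    _ = b * σ ^ 2 := by rw [hv, mul_one]

end Noise

theorem stmt_16_general {Ω : Type*} [MeasurableSpace Ω] (P : Measure Ω) [IsProbabilityMeasure P]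
    (n : ℕ) (e : Fin n → Ω → ℝ)
    (hindep : iIndepFun e P)
    (hL2 : ∀ i, MemLp (e i) 2 P)
    (hmean : ∀ i, ∫ ω, e i ω ∂P = 0)
    (σ : ℝ) (hvar : ∀ i, variance (e i) P ≤ σ ^ 2)
    (w : Fin n → ℝ) (B : ℝ) (hB : 0 < B)
    (hw : ∀ i, w i ^ 2 ≤ B / n)
    (v : Fin n → Fin n → ℝ)
    (hortho : ∀ k l : Fin n,
      ∑ i, w i ^ 2 * v k i * v l i = if k = l then (1 : ℝ) else 0)
    (lam c : ℝ) (hlam : 0 < lam) (hc : 0 < c)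
    (d : ℕ) (hd : d = 1 ∨ d = 2 ∨ d = 3)
    (β : Fin n → ℝ)
    (hβ : ∀ k : Fin n, c * ((k : ℕ) + 1 : ℝ) ^ ((4 : ℝ) / d) ≤ β k) :
    ∫ ω, (∑ k, (1 + lam * β k)⁻¹ * (∑ i, w i ^ 2 * e i ω * v k i) ^ 2) ∂P
      ≤ (B * σ ^ 2 / n) * (4 / (4 - (d : ℝ))) * (c * lam) ^ (-(d : ℝ) / 4) := by
  have hp : 1 < (4 : ℝ) / d := by rcases hd with rfl | rfl | rfl <;> norm_num
  have hpair : Pairwise fun i j => e i ⟂ᵢ[P] e j := fun _ _ hij => hindep.indepFun hij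
  have hpairing : ∀ k, ∫ ω, (∑ i, w i ^ 2 * e i ω * v k i) ^ 2 ∂P ≤ B * σ ^ 2 / n := fun k => by
    simpa [mul_div_right_comm] using integral_sq_weighted_pairing_le hpair hL2 hmean hvar hw
      ((hortho k k).trans (if_pos rfl))
  have hint : ∀ k, Integrable (fun ω => (∑ i, w i ^ 2 * e i ω * v k i) ^ 2) P := fun k =>
    (memLp_finsetSum _ fun i _ => ((hL2 i).const_mul (w i ^ 2)).mul_const (v k i)).integrable_sq
  have hden : ∀ k, 0 ≤ (1 + lam * β k)⁻¹ := fun k => by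
    have hβ_pos : 0 < β k := lt_of_lt_of_le (by positivity) (hβ k)
    exact inv_nonneg.2 (by linarith [mul_pos hlam hβ_pos])
  calc ∫ ω, (∑ k, (1 + lam * β k)⁻¹ * (∑ i, w i ^ 2 * e i ω * v k i) ^ 2) ∂P
      = ∑ k, (1 + lam * β k)⁻¹ * ∫ ω, (∑ i, w i ^ 2 * e i ω * v k i) ^ 2 ∂P := by
        rw [integral_finsetSum _ fun k _ => (hint k).const_mul _]
        simp only [integral_const_mul]
    _ ≤ ∑ k, (1 + lam * β k)⁻¹ * (B * σ ^ 2 / n) :=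
        Finset.sum_le_sum fun k _ => mul_le_mul_of_nonneg_left (hpairing k) (hden k)
    _ = B * σ ^ 2 / n * ∑ k, (1 + lam * β k)⁻¹ := by rw [Finset.mul_sum]; simp only [mul_comm]
    _ ≤ B * σ ^ 2 / n * ((4 / d) / (4 / d - 1) * (c * lam) ^ (-1 / (4 / d : ℝ))) := by
        gcongr
        exact sum_inv_one_add_mul_le_of_rpow_le hc hlam hp hβ
    _ = (B * σ ^ 2 / n) * (4 / (4 - (d : ℝ))) * (c * lam) ^ (-(d : ℝ) / 4) := by
        rcases hd with rfl | rfl | rfl <;> norm_num <;> ring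

/-- Combined estimate of Lemma 3.3: for independent zero-mean noises `eᵢ` with variance
at most `σ²`, weights `wᵢ² ≤ B/n`, vectors `v_k` orthonormal in the weighted inner
product `∑ᵢ wᵢ² xᵢ yᵢ`, and eigenvalues `β_k ≥ c k^{4/d}` (`d ∈ {1,2,3}`),
`E[∑_k (1 + λβ_k)⁻¹ (∑ᵢ wᵢ² eᵢ (v_k)ᵢ)²] ≤ (Bσ²/n)·(4/(4-d))·(cλ)^{-d/4}`. -/
theorem stmt_16 {Ω : Type*} [MeasurableSpace Ω] (P : Measure Ω) [IsProbabilityMeasure P]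
    (n : ℕ) (hn : 1 ≤ n) (e : Fin n → Ω → ℝ)
    (hmeas : ∀ i, Measurable (e i))
    (hindep : iIndepFun e P)
    (hL2 : ∀ i, MemLp (e i) 2 P)
    (hmean : ∀ i, ∫ ω, e i ω ∂P = 0)
    (σ : ℝ) (hvar : ∀ i, variance (e i) P ≤ σ ^ 2)
    (w : Fin n → ℝ) (B : ℝ) (hB : 0 < B)
    (hw : ∀ i, w i ^ 2 ≤ B / n)
    (v : Fin n → Fin n → ℝ)
    (hortho : ∀ k l : Fin n,
      ∑ i, w i ^ 2 * v k i * v l i = if k = l then (1 : ℝ) else 0)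
    (lam c : ℝ) (hlam : 0 < lam) (hc : 0 < c)
    (d : ℕ) (hd : d = 1 ∨ d = 2 ∨ d = 3)
    (β : Fin n → ℝ)
    (hβ : ∀ k : Fin n, c * ((k : ℕ) + 1 : ℝ) ^ ((4 : ℝ) / d) ≤ β k) :
    ∫ ω, (∑ k, (1 + lam * β k)⁻¹ * (∑ i, w i ^ 2 * e i ω * v k i) ^ 2) ∂P
      ≤ (B * σ ^ 2 / n) * (4 / (4 - (d : ℝ))) * (c * lam) ^ (-(d : ℝ) / 4) :=
  stmt_16_general P n e hindep hL2 hmean σ hvar w B hB hw v hortho lam c hlam hc d hd β hβ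
end
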